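/- Let α ≥ 5 be an integer, let G be a finite simple connected graph with maximum degree at least α + 2, and let u be a vertex of G with degree 1, with unique neighbor v. Suppose the graph G' = G − u admits an edge partition into spanning subgraphs F₁', F₂', H' such that F₁' and F₂' are forests with d_{F_i'}(w) ≤ max{2, ⌈(d_{G'}(w) − α + 6)/2⌉} for every vertex w and each i ∈ {1,2}, and H' has maximum degree at most α − 5. Then G admits an edge partition into spanning subgraphs F₁, F₂, H such that F₁ and F₂ are forests with d_{F_i}(w) ≤ max{2, ⌈(d_G(w) − α + 6)/2⌉} for every vertex w and each i ∈ {1,2}, and H has maximum degree at most α − 5. -/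

import Mathlib

/-!
Adding the pendant edge `uv` to `G' = G - u` raises the degree bounds only at `u` and `v`, and a
pendant edge closes no cycle, so it suffices to put `uv` into a class that has room at `v`. If
`H'` is not full at `v`, it takes `uv`. Otherwise `d_{H'}(v) = α - 5`, hence
`d_{F₁'}(v) + d_{F₂'}(v) = d_{G'}(v) - α + 5`, and the forest with the smaller degree at `v`
satisfies `2 d_{Fᵢ'}(v) + α ≤ d_{G'}(v) + 5`, which leaves room for one more edge under the
bound `⌈(d_G(v) - α + 6)/2⌉`, where `d_G(v) = d_{G'}(v) + 1`.
-/

/-- `F₁`, `F₂`, `H` form an edge partition of `G` into three spanning subgraphs: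
their edge sets are pairwise disjoint and their union is the edge set of `G`. -/
def EdgePartition3 {V : Type*} (G F₁ F₂ H : SimpleGraph V) : Prop :=
  F₁.edgeSet ∪ F₂.edgeSet ∪ H.edgeSet = G.edgeSet ∧
  Disjoint F₁.edgeSet F₂.edgeSet ∧
  Disjoint F₁.edgeSet H.edgeSet ∧
  Disjoint F₂.edgeSet H.edgeSet

open SimpleGraph

section

variable {V : Type*}

namespace SimpleGraph

lemma neighborSet_eq_singleton_of_ncard_eq_one {G : SimpleGraph V} {u v : V} (huv : G.Adj u v)
    (hu : (G.neighborSet u).ncard = 1) : G.neighborSet u = {v} := by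
  obtain ⟨a, ha⟩ := Set.ncard_eq_one.mp hu
  have hv : v ∈ G.neighborSet u := huv
  rw [ha, Set.mem_singleton_iff] at hv
  rw [ha, hv]

lemma deleteIncidenceSet_sup_edge {G : SimpleGraph V} {u v : V} (hu : G.neighborSet u = {v}) :
    G.deleteIncidenceSet u ⊔ edge u v = G := by
  have hadj : ∀ x, G.Adj u x ↔ x = v := fun x => Set.ext_iff.mp hu x
  have huv : u ≠ v := G.ne_of_adj ((hadj v).mpr rfl)
  ext a b
  rw [sup_adj, deleteIncidenceSet_adj, edge_adj]
  by_cases ha : a = u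
  · subst ha; grind
  by_cases hb : b = u
  · subst hb; grind [adj_comm]
  · grind

lemma IsAcyclic.sup_edge_of_isolated {X : SimpleGraph V} (hX : X.IsAcyclic) {u v : V}
    (huv : u ≠ v) (hu : ∀ w, ¬X.Adj u w) : (X ⊔ edge u v).IsAcyclic := by
  refine hX.sup_edge_of_not_reachable ?_
  rintro ⟨_ | ⟨h, _⟩⟩
  exacts [huv rfl, hu _ h]

lemma ncard_neighborSet_sup_edge [Finite V] [DecidableEq V] {X : SimpleGraph V} {u v : V}
    (huv : u ≠ v) (h : ¬X.Adj u v) (w : V) :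
    ((X ⊔ edge u v).neighborSet w).ncard =
      (X.neighborSet w).ncard + if w = u ∨ w = v then 1 else 0 := by
  rw [neighborSet_sup]
  by_cases hwu : w = u
  · subst hwu
    have he : (edge w v).neighborSet w = {v} := by ext; grind [mem_neighborSet]
    rw [he, Set.union_singleton, Set.ncard_insert_of_notMem (show v ∉ X.neighborSet w from h),
      if_pos (Or.inl rfl)]
  by_cases hwv : w = v
  · subst hwv
    have he : (edge u w).neighborSet w = {u} := by ext; grind [mem_neighborSet]
    rw [he, Set.union_singleton,
      Set.ncard_insert_of_notMem (show u ∉ X.neighborSet w from fun h' => h h'.symm),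
      if_pos (Or.inr rfl)]
  · have he : (edge u v).neighborSet w = ∅ := by ext; grind [mem_neighborSet]
    rw [he, Set.union_empty, if_neg (by tauto), add_zero]

lemma ncard_neighborSet_le_of_le [Finite V] {G G' : SimpleGraph V} (h : G ≤ G') (w : V) :
    (G.neighborSet w).ncard ≤ (G'.neighborSet w).ncard :=
  Set.ncard_le_ncard (neighborSet_mono h w)

lemma ncard_neighborSet_eq_zero_of_forall_not_adj {G : SimpleGraph V} {u : V}
    (hu : ∀ w, ¬G.Adj u w) :
    (G.neighborSet u).ncard = 0 := by
  rw [show G.neighborSet u = ∅ from Set.eq_empty_of_forall_notMem hu, Set.ncard_empty]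

end SimpleGraph

lemma edgePartition3_iff {G F₁ F₂ H : SimpleGraph V} :
    EdgePartition3 G F₁ F₂ H ↔
      F₁ ⊔ F₂ ⊔ H = G ∧ Disjoint F₁ F₂ ∧ Disjoint F₁ H ∧ Disjoint F₂ H := by
  simp only [EdgePartition3, ← edgeSet_sup, edgeSet_inj, disjoint_edgeSet]

namespace EdgePartition3

variable {G F₁ F₂ H : SimpleGraph V}

lemma swap (h : EdgePartition3 G F₁ F₂ H) : EdgePartition3 G F₂ F₁ H := by
  obtain ⟨hG, h₁₂, h₁H, h₂H⟩ := edgePartition3_iff.mp h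
  exact edgePartition3_iff.mpr ⟨by rw [← hG, sup_comm F₂], h₁₂.symm, h₂H, h₁H⟩

lemma left_le (h : EdgePartition3 G F₁ F₂ H) : F₁ ≤ G := by
  rw [← (edgePartition3_iff.mp h).1, sup_assoc]; exact le_sup_left

lemma right_le (h : EdgePartition3 G F₁ F₂ H) : H ≤ G := by
  rw [← (edgePartition3_iff.mp h).1]; exact le_sup_right

lemma sup_edge_left (h : EdgePartition3 G F₁ F₂ H) {u v : V} (huv : ¬G.Adj u v) :
    EdgePartition3 (G ⊔ edge u v) (F₁ ⊔ edge u v) F₂ H := by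
  obtain ⟨hG, h₁₂, h₁H, h₂H⟩ := edgePartition3_iff.mp h
  have hdisj : Disjoint G (edge u v) := (disjoint_edge G).mpr huv
  refine edgePartition3_iff.mpr ⟨by rw [← hG]; ac_rfl, ?_, ?_, h₂H⟩
  · exact disjoint_sup_left.mpr ⟨h₁₂, (hdisj.mono_left h.swap.left_le).symm⟩
  · exact disjoint_sup_left.mpr ⟨h₁H, (hdisj.mono_left h.right_le).symm⟩

lemma sup_edge_right (h : EdgePartition3 G F₁ F₂ H) {u v : V} (huv : ¬G.Adj u v) :
    EdgePartition3 (G ⊔ edge u v) F₁ F₂ (H ⊔ edge u v) := by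
  obtain ⟨hG, h₁₂, h₁H, h₂H⟩ := edgePartition3_iff.mp h
  have hdisj : Disjoint G (edge u v) := (disjoint_edge G).mpr huv
  refine edgePartition3_iff.mpr ⟨by rw [← hG]; ac_rfl, h₁₂, ?_, ?_⟩
  · exact disjoint_sup_right.mpr ⟨h₁H, hdisj.mono_left h.left_le⟩
  · exact disjoint_sup_right.mpr ⟨h₂H, hdisj.mono_left h.swap.left_le⟩

lemma ncard_neighborSet_add [Finite V] (h : EdgePartition3 G F₁ F₂ H) (w : V) :
    (F₁.neighborSet w).ncard + (F₂.neighborSet w).ncard + (H.neighborSet w).ncard =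
      (G.neighborSet w).ncard := by
  obtain ⟨hG, h₁₂, h₁H, h₂H⟩ := edgePartition3_iff.mp h
  have hN : G.neighborSet w = F₁.neighborSet w ∪ F₂.neighborSet w ∪ H.neighborSet w := by
    rw [← hG]; rfl
  rw [hN, Set.ncard_union_eq, Set.ncard_union_eq]
  · exact disjoint_neighborSet.mpr h₁₂ w
  · exact Disjoint.union_left (disjoint_neighborSet.mpr h₁H w) (disjoint_neighborSet.mpr h₂H w)

end EdgePartition3

def forestDegreeBound (α d : ℕ) : ℤ := max 2 ⌈((d : ℚ) - α + 6) / 2⌉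

lemma forestDegreeBound_mono (α : ℕ) : Monotone (forestDegreeBound α) := fun d d' h => by
  unfold forestDegreeBound
  gcongr

lemma two_le_forestDegreeBound (α d : ℕ) : 2 ≤ forestDegreeBound α d := le_max_left _ _

lemma add_one_le_forestDegreeBound_succ {α d k : ℕ} (h : 2 * k + α ≤ d + 5) :
    (k : ℤ) + 1 ≤ forestDegreeBound α (d + 1) := by
  have hq : (2 * k + α : ℚ) ≤ d + 5 := by exact_mod_cast h
  have hk : (((k : ℤ) + 1 : ℤ) : ℚ) ≤ (((d + 1 : ℕ) : ℚ) - α + 6) / 2 := by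
    push_cast; linarith
  exact le_max_of_le_right (Int.cast_le.mp (hk.trans (Int.le_ceil _)))

structure IsTwoForestDecomposition (α : ℕ) (G F₁ F₂ H : SimpleGraph V) : Prop where
  partition : EdgePartition3 G F₁ F₂ H
  acyclic₁ : F₁.IsAcyclic
  acyclic₂ : F₂.IsAcyclic
  degree₁ : ∀ w, ((F₁.neighborSet w).ncard : ℤ) ≤ forestDegreeBound α (G.neighborSet w).ncard
  degree₂ : ∀ w, ((F₂.neighborSet w).ncard : ℤ) ≤ forestDegreeBound α (G.neighborSet w).ncard
  degreeH : ∀ w, (H.neighborSet w).ncard ≤ α - 5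

namespace IsTwoForestDecomposition

variable {α : ℕ} {G F₁ F₂ H : SimpleGraph V} {u v : V}

lemma swap (hD : IsTwoForestDecomposition α G F₁ F₂ H) : IsTwoForestDecomposition α G F₂ F₁ H :=
  ⟨hD.partition.swap, hD.acyclic₂, hD.acyclic₁, hD.degree₂, hD.degree₁, hD.degreeH⟩

variable [Finite V]

lemma degree₂_sup_edge (hD : IsTwoForestDecomposition α G F₁ F₂ H) (w : V) :
    ((F₂.neighborSet w).ncard : ℤ) ≤
      forestDegreeBound α ((G ⊔ edge u v).neighborSet w).ncard :=
  (hD.degree₂ w).trans (forestDegreeBound_mono α (ncard_neighborSet_le_of_le le_sup_left w))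

lemma sup_edge_right (hD : IsTwoForestDecomposition α G F₁ F₂ H) (huv : u ≠ v)
    (hu : ∀ w, ¬G.Adj u w) (hv : (H.neighborSet v).ncard < α - 5) :
    IsTwoForestDecomposition α (G ⊔ edge u v) F₁ F₂ (H ⊔ edge u v) := by
  classical
  have hHu : ∀ w, ¬H.Adj u w := fun w h => hu w (hD.partition.right_le h)
  refine ⟨hD.partition.sup_edge_right (hu v), hD.acyclic₁, hD.acyclic₂, hD.swap.degree₂_sup_edge,
    hD.degree₂_sup_edge, fun w => ?_⟩
  rw [ncard_neighborSet_sup_edge huv (hHu v)]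
  split_ifs with hw
  · rcases hw with rfl | rfl
    · rw [ncard_neighborSet_eq_zero_of_forall_not_adj hHu]; omega
    · omega
  · exact hD.degreeH w

lemma sup_edge_left (hD : IsTwoForestDecomposition α G F₁ F₂ H) (huv : u ≠ v)
    (hu : ∀ w, ¬G.Adj u w) (hv : 2 * (F₁.neighborSet v).ncard + α ≤ (G.neighborSet v).ncard + 5) :
    IsTwoForestDecomposition α (G ⊔ edge u v) (F₁ ⊔ edge u v) F₂ H := by
  classical
  have hF₁u : ∀ w, ¬F₁.Adj u w := fun w h => hu w (hD.partition.left_le h)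
  refine ⟨hD.partition.sup_edge_left (hu v), hD.acyclic₁.sup_edge_of_isolated huv hF₁u,
    hD.acyclic₂, fun w => ?_, hD.degree₂_sup_edge, hD.degreeH⟩
  rw [ncard_neighborSet_sup_edge huv (hF₁u v), ncard_neighborSet_sup_edge huv (hu v)]
  split_ifs with hw
  · rcases hw with rfl | rfl
    · rw [ncard_neighborSet_eq_zero_of_forall_not_adj hF₁u]
      exact le_trans (by norm_num) (two_le_forestDegreeBound α _)
    · exact_mod_cast add_one_le_forestDegreeBound_succ hv
  · exact hD.degree₁ w

lemma exists_sup_edge (hD : IsTwoForestDecomposition α G F₁ F₂ H) (huv : u ≠ v)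
    (hu : ∀ w, ¬G.Adj u w) :
    ∃ F₁ F₂ H, IsTwoForestDecomposition α (G ⊔ edge u v) F₁ F₂ H := by
  by_cases hH : (H.neighborSet v).ncard < α - 5
  · exact ⟨_, _, _, hD.sup_edge_right huv hu hH⟩
  have hsum := hD.partition.ncard_neighborSet_add v
  have hHv := hD.degreeH v
  rcases le_total (F₁.neighborSet v).ncard (F₂.neighborSet v).ncard with h | h
  · exact ⟨_, _, _, hD.sup_edge_left huv hu (by omega)⟩
  · exact ⟨_, _, _, (hD.swap.sup_edge_left huv hu (by omega)).swap⟩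

end IsTwoForestDecomposition

end

theorem statement5_general {V : Type*} [Fintype V] (α : ℕ)
    (G : SimpleGraph V)
    (u v : V) (huv : G.Adj u v) (hdu : (G.neighborSet u).ncard = 1)
    (G' : SimpleGraph V) (hG' : G' = G.deleteEdges (G.incidenceSet u))
    (F₁' F₂' H' : SimpleGraph V)
    (hpart' : EdgePartition3 G' F₁' F₂' H')
    (hF₁' : F₁'.IsAcyclic) (hF₂' : F₂'.IsAcyclic)
    (hd₁' : ∀ w, ((F₁'.neighborSet w).ncard : ℤ) ≤
      max 2 ⌈(((G'.neighborSet w).ncard : ℚ) - α + 6) / 2⌉)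
    (hd₂' : ∀ w, ((F₂'.neighborSet w).ncard : ℤ) ≤
      max 2 ⌈(((G'.neighborSet w).ncard : ℚ) - α + 6) / 2⌉)
    (hH' : ∀ w, (H'.neighborSet w).ncard ≤ α - 5) :
    ∃ F₁ F₂ H : SimpleGraph V,
      EdgePartition3 G F₁ F₂ H ∧
      F₁.IsAcyclic ∧ F₂.IsAcyclic ∧
      (∀ w, ((F₁.neighborSet w).ncard : ℤ) ≤
        max 2 ⌈(((G.neighborSet w).ncard : ℚ) - α + 6) / 2⌉) ∧
      (∀ w, ((F₂.neighborSet w).ncard : ℤ) ≤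
        max 2 ⌈(((G.neighborSet w).ncard : ℚ) - α + 6) / 2⌉) ∧
      (∀ w, (H.neighborSet w).ncard ≤ α - 5) := by
  replace hG' : G' = G.deleteIncidenceSet u := hG'
  have hD' : IsTwoForestDecomposition α G' F₁' F₂' H' := ⟨hpart', hF₁', hF₂', hd₁', hd₂', hH'⟩
  have hu : ∀ w, ¬G'.Adj u w := fun w h => (deleteIncidenceSet_adj.mp (hG' ▸ h)).2.1 rfl
  have hG : G' ⊔ edge u v = G :=
    hG' ▸ deleteIncidenceSet_sup_edge (neighborSet_eq_singleton_of_ncard_eq_one huv hdu)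
  obtain ⟨F₁, F₂, H, hD⟩ := hD'.exists_sup_edge huv.ne hu
  rw [hG] at hD
  exact ⟨F₁, F₂, H, hD.partition, hD.acyclic₁, hD.acyclic₂, hD.degree₁, hD.degree₂, hD.degreeH⟩

/-- Let `α ≥ 5`, let `G` be a finite simple connected graph with
maximum degree at least `α + 2`, and let `u` be a vertex of degree 1 with (unique)
neighbor `v`.  If `G' = G - u` (obtained by deleting `u`, i.e. removing all edges
incident with `u`) has an edge partition into forests `F₁'`, `F₂'` with
`d_{Fᵢ'}(w) ≤ max {2, ⌈(d_{G'}(w) - α + 6)/2⌉}` for all `w`, and a subgraph `H'` with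
`Δ(H') ≤ α - 5`, then `G` has an edge partition into forests `F₁`, `F₂` with
`d_{Fᵢ}(w) ≤ max {2, ⌈(d_G(w) - α + 6)/2⌉}` for all `w`, and a subgraph `H` with
`Δ(H) ≤ α - 5`. -/
theorem statement5 {V : Type*} [Fintype V] (α : ℕ) (hα : 5 ≤ α)
    (G : SimpleGraph V) [DecidableRel G.Adj]
    (hconn : G.Connected) (hΔ : α + 2 ≤ G.maxDegree)
    (u v : V) (huv : G.Adj u v) (hdu : (G.neighborSet u).ncard = 1)
    (G' : SimpleGraph V) (hG' : G' = G.deleteEdges (G.incidenceSet u))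
    (F₁' F₂' H' : SimpleGraph V)
    (hpart' : EdgePartition3 G' F₁' F₂' H')
    (hF₁' : F₁'.IsAcyclic) (hF₂' : F₂'.IsAcyclic)
    (hd₁' : ∀ w, ((F₁'.neighborSet w).ncard : ℤ) ≤
      max 2 ⌈(((G'.neighborSet w).ncard : ℚ) - α + 6) / 2⌉)
    (hd₂' : ∀ w, ((F₂'.neighborSet w).ncard : ℤ) ≤
      max 2 ⌈(((G'.neighborSet w).ncard : ℚ) - α + 6) / 2⌉)
    (hH' : ∀ w, (H'.neighborSet w).ncard ≤ α - 5) :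
    ∃ F₁ F₂ H : SimpleGraph V,
      EdgePartition3 G F₁ F₂ H ∧
      F₁.IsAcyclic ∧ F₂.IsAcyclic ∧
      (∀ w, ((F₁.neighborSet w).ncard : ℤ) ≤
        max 2 ⌈(((G.neighborSet w).ncard : ℚ) - α + 6) / 2⌉) ∧
      (∀ w, ((F₂.neighborSet w).ncard : ℤ) ≤
        max 2 ⌈(((G.neighborSet w).ncard : ℚ) - α + 6) / 2⌉) ∧
      (∀ w, (H.neighborSet w).ncard ≤ α - 5) :=
  statement5_general α G u v huv hdu G' hG' F₁' F₂' H' hpart' hF₁' hF₂' hd₁' hd₂' hH'
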